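/- arXiv:1501.00161 — 2 statements merged into one kernel-verified Lean document; each statement's English description precedes it below -/
import Mathlib

section
/- If w : [0,∞) → ℝ≥0 defined along a hybrid time evolution satisfies w(t,j) ≤ e^{λ_c t + λ_d j} w(0,0) while (t,j) ranges over a time domain with minimal average inter-jump time τ (i.e. j ≤ N₀ + t/τ for all (t,j)), λ_c < 0, λ_d ≥ 0 and λ_d + λ_c τ < 0, then w(t,j) → 0 as t → ∞ (with j the corresponding jump count), and moreover w(t,j) ≤ e^{λ_d N₀} w(0,0) for all (t,j). -/
/-!
Under the average dwell-time condition `j ≤ N₀ + t/τ`, the jump gain `λ_d j` is at most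
`λ_d N₀ + (λ_d/τ) t`, so the exponent `λ_c t + λ_d j` is bounded by `λ_d N₀ + α t` with
`α = λ_c + λ_d/τ = (λ_d + λ_c τ)/τ < 0`. Both claims follow: `α t ≤ 0` for `t ≥ 0`, and
`e^{λ_d N₀ + α t} → 0` as `t → ∞`.
-/

open Filter Topology

lemma add_mul_le_of_le_add_div {lc ld τ N0 t j : ℝ} (hld : 0 ≤ ld) (hj : j ≤ N0 + t / τ) :
    lc * t + ld * j ≤ ld * N0 + (lc + ld / τ) * t :=
  calc lc * t + ld * j ≤ lc * t + ld * (N0 + t / τ) := by gcongr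
    _ = ld * N0 + (lc + ld / τ) * t := by ring

lemma add_div_neg_of_add_mul_neg {lc ld τ : ℝ} (hτ : 0 < τ) (h : ld + lc * τ < 0) :
    lc + ld / τ < 0 := by
  have hrate : lc + ld / τ = (ld + lc * τ) / τ := by field_simp; ring
  rw [hrate]
  exact div_neg_of_neg_of_pos h hτ

lemma tendsto_exp_add_mul_mul_atTop_zero {a α : ℝ} (hα : α < 0) (c : ℝ) :
    Tendsto (fun t => Real.exp (a + α * t) * c) atTop (𝓝 0) := by
  have hlin : Tendsto (fun t => a + α * t) atTop atBot :=
    tendsto_atBot_add_const_left _ a (tendsto_id.const_mul_atTop_of_neg hα)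
  simpa using (Real.tendsto_exp_atBot.comp hlin).mul_const c

theorem stmt_9_general (E : Set (ℝ × ℕ)) (w : ℝ → ℕ → ℝ) (lc ld τ N0 : ℝ)
    (hld : 0 ≤ ld) (hτ : 0 < τ) (h : ld + lc * τ < 0)
    (hEpos : ∀ p ∈ E, 0 ≤ p.1)
    (hbnd : ∀ p ∈ E, w p.1 p.2 ≤ Real.exp (lc * p.1 + ld * (p.2 : ℝ)) * w 0 0)
    (hw0 : 0 ≤ w 0 0)
    (hdwell : ∀ p ∈ E, (p.2 : ℝ) ≤ N0 + p.1 / τ) :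
    (∀ p ∈ E, w p.1 p.2 ≤ Real.exp (ld * N0) * w 0 0)
      ∧ (∀ ε > (0 : ℝ), ∃ T : ℝ, ∀ p ∈ E, T ≤ p.1 → w p.1 p.2 < ε) := by
  have hα := add_div_neg_of_add_mul_neg hτ h
  have hdecay : ∀ p ∈ E, w p.1 p.2 ≤ Real.exp (ld * N0 + (lc + ld / τ) * p.1) * w 0 0 :=
    fun p hp => (hbnd p hp).trans <| mul_le_mul_of_nonneg_right
      (Real.exp_le_exp.2 (add_mul_le_of_le_add_div hld (hdwell p hp))) hw0
  refine ⟨fun p hp => (hdecay p hp).trans ?_, fun ε hε => ?_⟩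
  · gcongr
    linarith [mul_nonpos_of_nonpos_of_nonneg hα.le (hEpos p hp)]
  · obtain ⟨T, hT⟩ := eventually_atTop.1 <|
      (tendsto_exp_add_mul_mul_atTop_zero (a := ld * N0) hα (w 0 0)).eventually (gt_mem_nhds hε)
    exact ⟨T, fun p hp hTp => (hdecay p hp).trans_lt (hT p.1 hTp)⟩

/-- if `w(t,j) ≤ e^{λ_c t + λ_d j} w(0,0)` on a hybrid time domain `E` with
minimal average inter-jump time `τ` (`j ≤ N₀ + t/τ`), with `λ_c < 0`, `λ_d ≥ 0` and
`λ_d + λ_c τ < 0`, then `w(t,j) ≤ e^{λ_d N₀} w(0,0)` on `E` and `w(t,j) → 0` as `t → ∞`. -/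
theorem stmt_9 (E : Set (ℝ × ℕ)) (w : ℝ → ℕ → ℝ) (lc ld τ N0 : ℝ)
    (hlc : lc < 0) (hld : 0 ≤ ld) (hτ : 0 < τ) (hN0 : 0 < N0) (h : ld + lc * τ < 0)
    (hEpos : ∀ p ∈ E, 0 ≤ p.1)
    (hnn : ∀ p ∈ E, 0 ≤ w p.1 p.2)
    (hbnd : ∀ p ∈ E, w p.1 p.2 ≤ Real.exp (lc * p.1 + ld * (p.2 : ℝ)) * w 0 0)
    (hw0 : 0 ≤ w 0 0)
    (hdwell : ∀ p ∈ E, (p.2 : ℝ) ≤ N0 + p.1 / τ) :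
    (∀ p ∈ E, w p.1 p.2 ≤ Real.exp (ld * N0) * w 0 0)
      ∧ (∀ ε > (0 : ℝ), ∃ T : ℝ, ∀ p ∈ E, T ≤ p.1 → w p.1 p.2 < ε) :=
  stmt_9_general E w lc ld τ N0 hld hτ h hEpos hbnd hw0 hdwell
end

section
/- Let J ∈ ℝ^{1×n} be nonzero, L ∈ ℝ^{n×n} invertible, M ∈ ℝⁿ, s ∈ {−1,1} with s(1 + J L⁻¹ M) < 0, and let Ḡ(y) = (L+MJ)y + H + MK + sLJᵀμ with μ = max(0, z₁y+z₂) ≥ 0. Define c_gd(x) = s(JL⁻¹x + K − JL⁻¹H). Then for all y with Jy + K ≤ 0 one has c_gd(Ḡ(y)) = s(1 + JL⁻¹M)(Jy+K) + JJᵀμ ≥ 0. -/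
/-! Since `JL⁻¹ L = J`, applying `JL⁻¹` to `Ḡ(y)` turns `(L + MJ)y` into `(1 + JL⁻¹M)Jy` and
`sLJᵀμ` into `sJJᵀμ`, while `s² = 1` absorbs the second factor of `s`.  The sign claim is then
a sum of two nonnegative terms: a product of two nonpositive factors, and `JJᵀμ`. -/

open Matrix

theorem Matrix.vecMul_nonsing_inv_dotProduct_mulVec {ι R : Type*} [Fintype ι] [DecidableEq ι]
    [CommRing R] {L : Matrix ι ι R} (hL : IsUnit L.det) (j v : ι → R) :
    vecMul j L⁻¹ ⬝ᵥ L *ᵥ v = j ⬝ᵥ v := by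
  rw [← dotProduct_mulVec, mulVec_mulVec, nonsing_inv_mul L hL, one_mulVec]

theorem smul_vecMul_nonsing_inv_dotProduct_step_eq {ι R : Type*} [Fintype ι] [DecidableEq ι]
    [CommRing R] {L : Matrix ι ι R} (hL : IsUnit L.det) {s : R} (hs : s * s = 1)
    (j M H y : ι → R) (K m : R) :
    s * (vecMul j L⁻¹ ⬝ᵥ (L *ᵥ y + H + (j ⬝ᵥ y + K) • M + (s * m) • L *ᵥ j) + K
        - vecMul j L⁻¹ ⬝ᵥ H)
      = s * (1 + vecMul j L⁻¹ ⬝ᵥ M) * (j ⬝ᵥ y + K) + (j ⬝ᵥ j) * m := by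
  simp only [dotProduct_add, dotProduct_smul, smul_eq_mul,
    vecMul_nonsing_inv_dotProduct_mulVec hL]
  linear_combination (m * (j ⬝ᵥ j)) * hs

theorem stmt_17_general {n : ℕ} (L : Matrix (Fin n) (Fin n) ℝ) (hL : IsUnit L.det)
    (j M H z1 : Fin n → ℝ) (K z2 s : ℝ) (hs : s = 1 ∨ s = -1)
    (hsc : s * (1 + (vecMul j L⁻¹) ⬝ᵥ M) < 0)
    (μ : (Fin n → ℝ) → ℝ) (hμ : ∀ y, μ y = max 0 (z1 ⬝ᵥ y + z2))
    (Gbar : (Fin n → ℝ) → (Fin n → ℝ))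
    (hGbar : ∀ y, Gbar y = L.mulVec y + H + (j ⬝ᵥ y + K) • M + (s * μ y) • L.mulVec j)
    (cgd : (Fin n → ℝ) → ℝ)
    (hcgd : ∀ x, cgd x = s * ((vecMul j L⁻¹) ⬝ᵥ x + K - (vecMul j L⁻¹) ⬝ᵥ H)) :
    ∀ y : Fin n → ℝ, j ⬝ᵥ y + K ≤ 0 →
      cgd (Gbar y) = s * (1 + (vecMul j L⁻¹) ⬝ᵥ M) * (j ⬝ᵥ y + K) + (j ⬝ᵥ j) * μ y
        ∧ 0 ≤ cgd (Gbar y) := by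
  intro y hy
  have hss : s * s = 1 := by rcases hs with rfl | rfl <;> norm_num
  have heq : cgd (Gbar y) = s * (1 + (vecMul j L⁻¹) ⬝ᵥ M) * (j ⬝ᵥ y + K) + (j ⬝ᵥ j) * μ y := by
    rw [hcgd, hGbar]
    exact smul_vecMul_nonsing_inv_dotProduct_step_eq hL hss j M H y K (μ y)
  have hμy : 0 ≤ μ y := (hμ y).symm ▸ le_max_left _ _
  have hjj : 0 ≤ j ⬝ᵥ j := by simpa using dotProduct_self_star_nonneg j
  refine ⟨heq, heq ▸ add_nonneg ?_ (mul_nonneg hjj hμy)⟩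
  exact mul_nonneg_of_nonpos_of_nonpos hsc.le hy

/-- with `Ḡ(y) = (L+MJ)y + H + MK + sLJᵀμ`, `μ = max(0, z₁y+z₂)` and
`c_gd(x) = s(JL⁻¹x + K − JL⁻¹H)`, if `s(1 + JL⁻¹M) < 0` then for all `y` with `Jy + K ≤ 0`,
`c_gd(Ḡ(y)) = s(1 + JL⁻¹M)(Jy+K) + JJᵀμ ≥ 0`.  Rows/columns are encoded as vectors: `J` is
the vector `j` (a row), `Jᵀ` the same vector as a column, and `JL⁻¹ = vecMul j L⁻¹`. -/
theorem stmt_17 {n : ℕ} (L : Matrix (Fin n) (Fin n) ℝ) (hL : IsUnit L.det)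
    (j M H z1 : Fin n → ℝ) (hj : j ≠ 0) (K z2 s : ℝ) (hs : s = 1 ∨ s = -1)
    (hsc : s * (1 + (vecMul j L⁻¹) ⬝ᵥ M) < 0)
    (μ : (Fin n → ℝ) → ℝ) (hμ : ∀ y, μ y = max 0 (z1 ⬝ᵥ y + z2))
    (Gbar : (Fin n → ℝ) → (Fin n → ℝ))
    (hGbar : ∀ y, Gbar y = L.mulVec y + H + (j ⬝ᵥ y + K) • M + (s * μ y) • L.mulVec j)
    (cgd : (Fin n → ℝ) → ℝ)
    (hcgd : ∀ x, cgd x = s * ((vecMul j L⁻¹) ⬝ᵥ x + K - (vecMul j L⁻¹) ⬝ᵥ H)) :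
    ∀ y : Fin n → ℝ, j ⬝ᵥ y + K ≤ 0 →
      cgd (Gbar y) = s * (1 + (vecMul j L⁻¹) ⬝ᵥ M) * (j ⬝ᵥ y + K) + (j ⬝ᵥ j) * μ y
        ∧ 0 ≤ cgd (Gbar y) :=
  stmt_17_general L hL j M H z1 K z2 s hs hsc μ hμ Gbar hGbar cgd hcgd
end
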